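/- For positive semidefinite matrices A, B and every k, the sum of the k largest singular values of (A−B)² is at most the sum of the k largest singular values of A² − B²; equivalently, ‖(A−B)²‖ ≤ ‖A²−B²‖ for all unitarily invariant norms. -/

import Mathlib

open Matrix
open scoped ComplexOrder

/-- `f` applied to a matrix via the spectral decomposition (junk value `0` if
the matrix is not Hermitian). -/
noncomputable def matFun {n : ℕ} (f : ℝ → ℝ) (A : Matrix (Fin n) (Fin n) ℂ) :
    Matrix (Fin n) (Fin n) ℂ :=
  if hA : A.IsHermitian then
    (hA.eigenvectorUnitary : Matrix (Fin n) (Fin n) ℂ) *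
      Matrix.diagonal (fun i => (f (hA.eigenvalues i) : ℂ)) *
      (star hA.eigenvectorUnitary : Matrix (Fin n) (Fin n) ℂ)
  else 0

/-- The eigenvalues of a Hermitian matrix, sorted in non-increasing order
(junk value `0` if the matrix is not Hermitian). -/
noncomputable def eigsDesc {n : ℕ} (A : Matrix (Fin n) (Fin n) ℂ) : Fin n → ℝ :=
  if hA : A.IsHermitian then (fun k => hA.eigenvalues (Tuple.sort hA.eigenvalues (Fin.rev k)))
  else 0

/-- The absolute value `|X| = (XᴴX)^{1/2}` of a matrix. -/
noncomputable def matAbs {n : ℕ} (X : Matrix (Fin n) (Fin n) ℂ) : Matrix (Fin n) (Fin n) ℂ :=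
  ((Matrix.posSemidef_conjTranspose_mul_self X).1.eigenvectorUnitary : Matrix (Fin n) (Fin n) ℂ) *
    Matrix.diagonal ((↑) ∘ ((Matrix.posSemidef_conjTranspose_mul_self X).1.eigenvalues · |>.sqrt)) *
    (star (Matrix.posSemidef_conjTranspose_mul_self X).1.eigenvectorUnitary : Matrix (Fin n) (Fin n) ℂ)

/-- The singular values of `X`, sorted in non-increasing order. -/
noncomputable def svalsDesc {n : ℕ} (X : Matrix (Fin n) (Fin n) ℂ) : Fin n → ℝ :=
  eigsDesc (matAbs X)

/-- Sum of the first `k` entries of a vector indexed by `Fin n`. -/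
noncomputable def kSum {n : ℕ} (μ : Fin n → ℝ) (k : ℕ) : ℝ :=
  ∑ j ∈ Finset.univ.filter (fun j : Fin n => (j : ℕ) < k), μ j

/-- The operator norm: the largest singular value. -/
noncomputable def opNorm {n : ℕ} (X : Matrix (Fin n) (Fin n) ℂ) : ℝ :=
  ⨆ i, svalsDesc X i

/-!
Let `u` be a unit eigenvector of `A - B`, with eigenvalue `c`. The identity
`2 (A² - B²) = (A - B)(A + B) + (A + B)(A - B)` gives `⟨u, (A² - B²) u⟩ = c ⟨u, (A + B) u⟩`, and
`A, B ≥ 0` give `⟨u, (A + B) u⟩ ≥ |c|`. As `|X| ± X ≥ 0` for Hermitian `X`, this yields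
`c² ≤ ⟨u, |A² - B²| u⟩`.
The eigenvalues of `(A - B)²` are the squares `c²`, so summing this over the eigenvectors of the
`k` largest of them and applying Ky Fan's maximum principle (the sum of `⟨uᵢ, S uᵢ⟩` over `k`
orthonormal vectors is at most the sum of the `k` largest eigenvalues of `S ≥ 0`) gives the claim.
-/

open Finset in
lemma sum_mul_le_kSum {n k : ℕ} {μ t : Fin n → ℝ} (hμ : Antitone μ) (hμ0 : ∀ i, 0 ≤ μ i)
    (ht0 : ∀ i, 0 ≤ t i) (ht1 : ∀ i, t i ≤ 1) (hsum : ∑ i, t i ≤ k) :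
    ∑ i, μ i * t i ≤ kSum μ k := by
  rcases le_or_gt n k with hnk | hkn
  · have hall : univ.filter (fun j : Fin n => (j : ℕ) < k) = univ := by
      ext j; simp [j.isLt.trans_le hnk]
    rw [kSum, hall]
    exact sum_le_sum fun i _ => mul_le_of_le_one_right (hμ0 i) (ht1 i)
  · set K : Fin n := ⟨k, hkn⟩
    set F := univ.filter (fun j : Fin n => (j : ℕ) < k)
    set G := univ.filter (fun j : Fin n => ¬ (j : ℕ) < k)
    have hF : (#F : ℝ) = k := by simp [F, Fin.card_filter_val_lt, hkn.le]
    have hin : ∀ i ∈ F, μ i * t i ≤ μ i + μ K * (t i - 1) := fun i hi => by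
      have : μ K ≤ μ i := hμ (Fin.le_def.mpr (by simp [F] at hi; simp [K]; omega))
      nlinarith [ht1 i]
    have hout : ∀ i ∈ G, μ i * t i ≤ μ K * t i := fun i hi =>
      mul_le_mul_of_nonneg_right (hμ (Fin.le_def.mpr (by simp [G] at hi; simp [K]; omega))) (ht0 i)
    have hsplit : ∑ i ∈ F, t i + ∑ i ∈ G, t i = ∑ i, t i := sum_filter_add_sum_filter_not _ _ _
    calc ∑ i, μ i * t i = ∑ i ∈ F, μ i * t i + ∑ i ∈ G, μ i * t i :=
          (sum_filter_add_sum_filter_not _ _ _).symm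
      _ ≤ ∑ i ∈ F, (μ i + μ K * (t i - 1)) + ∑ i ∈ G, μ K * t i :=
          add_le_add (sum_le_sum hin) (sum_le_sum hout)
      _ = kSum μ k + μ K * (∑ i, t i - k) := by
          rw [← hsplit, ← hF, sum_add_distrib, ← mul_sum, ← mul_sum, sum_sub_distrib]
          simp only [kSum, sum_const, nsmul_one, F]
          ring
      _ ≤ kSum μ k := by nlinarith [hμ0 K]

lemma exists_equiv_comp_eq_of_map_univ_eq {α β γ : Type*} [Fintype α] [Fintype β]
    [DecidableEq γ] {f : α → γ} {g : β → γ}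
    (h : Multiset.map f Finset.univ.val = Multiset.map g Finset.univ.val) :
    ∃ e : α ≃ β, g ∘ e = f := by
  have hfib : ∀ c, Fintype.card {a // f a = c} = Fintype.card {b // g b = c} := fun c => by
    have := congrArg (Multiset.count c) h
    simp only [Multiset.count_map] at this
    simp only [Fintype.card_subtype, eq_comm (a := f _), eq_comm (a := g _)]
    exact this
  exact ⟨Equiv.ofFiberEquiv fun c => Fintype.equivOfCardEq (hfib c),
    funext (Equiv.ofFiberEquiv_map _)⟩

lemma exists_card_le_kSum_comp_eq {n : ℕ} (d : Fin n → ℝ) (τ : Equiv.Perm (Fin n)) (k : ℕ) :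
    ∃ J : Finset (Fin n), J.card ≤ k ∧ kSum (d ∘ τ) k = ∑ i ∈ J, d i := by
  refine ⟨(Finset.univ.filter fun j : Fin n => (j : ℕ) < k).map τ.toEmbedding, ?_, ?_⟩
  · simp [Fin.card_filter_val_lt]
  · simp [kSum, Finset.sum_map]

open Unitary Polynomial in
lemma Matrix.charpoly_conjStarAlgAut {ι 𝕜 : Type*} [Fintype ι] [DecidableEq ι] [RCLike 𝕜]
    (U : unitaryGroup ι 𝕜) (M : Matrix ι ι 𝕜) :
    (conjStarAlgAut 𝕜 _ U M).charpoly = M.charpoly := by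
  rw [conjStarAlgAut_apply, Matrix.mul_assoc, charpoly_mul_comm, Matrix.mul_assoc]
  simp

open Unitary Polynomial in
lemma Matrix.IsHermitian.exists_eigenvalues_eq_comp {ι 𝕜 : Type*} [Fintype ι] [DecidableEq ι]
    [RCLike 𝕜] {H : Matrix ι ι 𝕜} (hH : H.IsHermitian) (U : unitaryGroup ι 𝕜) (d : ι → ℝ)
    (h : H = conjStarAlgAut 𝕜 _ U (diagonal (RCLike.ofReal ∘ d))) :
    ∃ σ : Equiv.Perm ι, hH.eigenvalues = d ∘ σ := by
  have hroots : H.charpoly.roots = Multiset.map (RCLike.ofReal ∘ d) Finset.univ.val := by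
    rw [h, charpoly_conjStarAlgAut, charpoly_diagonal, roots_prod]
    · simp
    · simp [Finset.prod_ne_zero_iff, X_sub_C_ne_zero]
  rw [hH.roots_charpoly_eq_eigenvalues] at hroots
  obtain ⟨σ, hσ⟩ := exists_equiv_comp_eq_of_map_univ_eq hroots.symm
  refine ⟨σ.symm, funext fun i => (RCLike.ofReal_injective (K := 𝕜)) ?_⟩
  simpa using congrFun hσ (σ.symm i)

section MatAbs

open scoped MatrixOrder

variable {n : ℕ}

lemma matAbs_eq_cfcAbs (X : Matrix (Fin n) (Fin n) ℂ) : matAbs X = CFC.abs X := by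
  have h := posSemidef_conjTranspose_mul_self X
  rw [CFC.abs, star_eq_conjTranspose, CFC.sqrt_eq_real_sqrt _ h.nonneg, cfcₙ_eq_cfc, h.1.cfc_eq,
    IsHermitian.cfc, Unitary.conjStarAlgAut_apply]
  rfl

lemma posSemidef_matAbs (X : Matrix (Fin n) (Fin n) ℂ) : (matAbs X).PosSemidef := by
  rw [matAbs_eq_cfcAbs, ← nonneg_iff_posSemidef]
  exact CFC.abs_nonneg X

lemma matAbs_of_posSemidef {X : Matrix (Fin n) (Fin n) ℂ} (hX : X.PosSemidef) : matAbs X = X := by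
  rw [matAbs_eq_cfcAbs]
  exact CFC.abs_of_nonneg X hX.nonneg

lemma abs_re_dotProduct_mulVec_le_matAbs {T : Matrix (Fin n) (Fin n) ℂ} (hT : T.IsHermitian)
    (x : Fin n → ℂ) : |(star x ⬝ᵥ (T *ᵥ x)).re| ≤ (star x ⬝ᵥ (matAbs T *ᵥ x)).re := by
  have hT' : IsSelfAdjoint T := hT
  have hsub : (matAbs T - T).PosSemidef := by
    rw [matAbs_eq_cfcAbs, CFC.abs_sub_self T, ← nonneg_iff_posSemidef]
    exact smul_nonneg zero_le_two (CFC.negPart_nonneg T)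
  have hadd : (matAbs T + T).PosSemidef := by
    rw [matAbs_eq_cfcAbs, CFC.abs_add_self T, ← nonneg_iff_posSemidef]
    exact smul_nonneg zero_le_two (CFC.posPart_nonneg T)
  have h1 := hsub.re_dotProduct_nonneg x
  have h2 := hadd.re_dotProduct_nonneg x
  simp only [sub_mulVec, add_mulVec, dotProduct_sub, dotProduct_add, map_sub, map_add,
    RCLike.re_to_complex] at h1 h2
  exact abs_le.mpr ⟨by linarith, by linarith⟩

end MatAbs

lemma sq_mul_re_dotProduct_le_matAbs_sq_sub_sq {n : ℕ} {A B : Matrix (Fin n) (Fin n) ℂ}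
    (hA : A.PosSemidef) (hB : B.PosSemidef) {u : Fin n → ℂ} {c : ℝ}
    (hu : (A - B) *ᵥ u = c • u) :
    c ^ 2 * (star u ⬝ᵥ u).re ≤ (star u ⬝ᵥ (matAbs (A ^ 2 - B ^ 2) *ᵥ u)).re := by
  have hu' : star u ᵥ* (A - B) = c • star u := by
    rw [← (hA.1.sub hB.1).eq, ← star_mulVec, hu, star_smul, star_trivial]
  have hT : star u ⬝ᵥ ((A ^ 2 - B ^ 2) *ᵥ u) = c * star u ⬝ᵥ ((A + B) *ᵥ u) := by
    have h2 : (2 : ℂ) • (A ^ 2 - B ^ 2) = (A - B) * (A + B) + (A + B) * (A - B) := by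
      rw [two_smul]; noncomm_ring
    have := congrArg (fun M => star u ⬝ᵥ (M *ᵥ u)) h2
    simp only [smul_mulVec, dotProduct_smul, add_mulVec, dotProduct_add, ← mulVec_mulVec,
      dotProduct_mulVec (star u) (A - B), hu', hu, mulVec_smul, dotProduct_smul,
      smul_dotProduct, smul_eq_mul, Complex.real_smul] at this
    rw [add_mulVec, dotProduct_add]
    linear_combination (1 / 2 : ℂ) * this
  have hC : star u ⬝ᵥ ((A - B) *ᵥ u) = c * star u ⬝ᵥ u := by
    rw [hu, dotProduct_smul, Complex.real_smul]
  set a := (star u ⬝ᵥ (A *ᵥ u)).re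
  set b := (star u ⬝ᵥ (B *ᵥ u)).re
  have ha : 0 ≤ a := hA.re_dotProduct_nonneg u
  have hb : 0 ≤ b := hB.re_dotProduct_nonneg u
  have hab : c * (star u ⬝ᵥ u).re = a - b := by
    have := congrArg Complex.re hC
    simp only [sub_mulVec, dotProduct_sub, Complex.sub_re, Complex.re_ofReal_mul] at this
    linarith
  have hT_re : (star u ⬝ᵥ ((A ^ 2 - B ^ 2) *ᵥ u)).re = c * (a + b) := by
    rw [hT, Complex.re_ofReal_mul, add_mulVec, dotProduct_add, Complex.add_re]
  have habs := abs_re_dotProduct_mulVec_le_matAbs ((hA.1.pow 2).sub (hB.1.pow 2)) u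
  rw [hT_re] at habs
  have hle : c * (a - b) ≤ |c * (a + b)| := by
    rcases le_total 0 c with hc | hc
    · rw [abs_of_nonneg (by positivity)]; nlinarith
    · rw [abs_of_nonpos (mul_nonpos_of_nonpos_of_nonneg hc (by positivity))]; nlinarith
  calc c ^ 2 * (star u ⬝ᵥ u).re = c * (a - b) := by rw [← hab]; ring
    _ ≤ _ := hle.trans habs

open scoped InnerProductSpace in
lemma Matrix.IsHermitian.re_dotProduct_mulVec_eq_sum_eigenvalues {ι 𝕜 : Type*} [Fintype ι]
    [DecidableEq ι] [RCLike 𝕜] {S : Matrix ι ι 𝕜} (hS : S.IsHermitian) (x : EuclideanSpace 𝕜 ι) :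
    RCLike.re (star ⇑x ⬝ᵥ (S *ᵥ ⇑x)) =
      ∑ p, hS.eigenvalues p * ‖⟪hS.eigenvectorBasis p, x⟫_𝕜‖ ^ 2 := by
  set w := hS.eigenvectorBasis
  have hSw : ∀ p, ⟪w p, WithLp.toLp 2 (S *ᵥ ⇑x)⟫_𝕜 = hS.eigenvalues p * ⟪w p, x⟫_𝕜 := fun p => by
    have hstar : star ⇑(w p) ᵥ* S = star (S *ᵥ ⇑(w p)) := by rw [star_mulVec, hS.eq]
    rw [EuclideanSpace.inner_eq_star_dotProduct, EuclideanSpace.inner_eq_star_dotProduct,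
      dotProduct_comm, dotProduct_mulVec, hstar, hS.mulVec_eigenvectorBasis,
      star_smul, smul_dotProduct, dotProduct_comm, RCLike.real_smul_eq_coe_mul, star_trivial]
  have h := w.sum_inner_mul_inner x (WithLp.toLp 2 (S *ᵥ ⇑x))
  rw [EuclideanSpace.inner_eq_star_dotProduct, WithLp.ofLp_toLp, dotProduct_comm] at h
  rw [← h, map_sum]
  refine Finset.sum_congr rfl fun p _ => ?_
  rw [hSw, mul_left_comm, RCLike.re_ofReal_mul, inner_mul_symm_re_eq_norm, norm_mul,
    norm_inner_symm, sq]

lemma eigsDesc_eq_comp {n : ℕ} {H : Matrix (Fin n) (Fin n) ℂ} (hH : H.IsHermitian) :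
    eigsDesc H = hH.eigenvalues ∘ (Fin.revPerm.trans (Tuple.sort hH.eigenvalues)) := by
  rw [eigsDesc, dif_pos hH]
  rfl

open scoped InnerProductSpace in
lemma sum_re_dotProduct_mulVec_le_kSum_eigsDesc {n k : ℕ} {S : Matrix (Fin n) (Fin n) ℂ}
    (hS : S.PosSemidef) (b : OrthonormalBasis (Fin n) ℂ (EuclideanSpace ℂ (Fin n)))
    {J : Finset (Fin n)} (hJ : J.card ≤ k) :
    ∑ i ∈ J, (star ⇑(b i) ⬝ᵥ (S *ᵥ ⇑(b i))).re ≤ kSum (eigsDesc S) k := by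
  set μ := hS.1.eigenvalues
  set w := hS.1.eigenvectorBasis
  set τ : Equiv.Perm (Fin n) := Fin.revPerm.trans (Tuple.sort μ)
  -- `t p` is the weight with which the eigenvalue `μ p` enters the left-hand side
  set t : Fin n → ℝ := fun p => ∑ i ∈ J, ‖⟪w p, b i⟫_ℂ‖ ^ 2
  have hlhs : ∑ i ∈ J, (star ⇑(b i) ⬝ᵥ (S *ᵥ ⇑(b i))).re = ∑ j, (μ ∘ τ) j * (t ∘ τ) j := by
    rw [show ∑ j, (μ ∘ τ) j * (t ∘ τ) j = ∑ p, μ p * t p from Equiv.sum_comp τ fun p => μ p * t p]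
    simp only [← RCLike.re_to_complex, hS.1.re_dotProduct_mulVec_eq_sum_eigenvalues, t,
      Finset.mul_sum]
    exact Finset.sum_comm
  rw [hlhs, eigsDesc_eq_comp hS.1]
  refine sum_mul_le_kSum ?_ (fun j => hS.eigenvalues_nonneg _)
    (fun j => Finset.sum_nonneg fun _ _ => by positivity) (fun j => ?_) ?_
  · exact (Tuple.monotone_sort μ).comp_antitone fun _ _ h => Fin.rev_le_rev.mpr h
  · calc t (τ j) ≤ ∑ i, ‖⟪w (τ j), b i⟫_ℂ‖ ^ 2 :=
          Finset.sum_le_sum_of_subset_of_nonneg J.subset_univ fun _ _ _ => by positivity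
      _ = 1 := by rw [b.sum_sq_norm_inner_left, w.orthonormal.1, one_pow]
  · calc ∑ j, t (τ j) = ∑ i ∈ J, ∑ p, ‖⟪w p, b i⟫_ℂ‖ ^ 2 := by
          rw [Equiv.sum_comp τ t, Finset.sum_comm]
      _ = J.card := by simp [w.sum_sq_norm_inner_right, b.orthonormal.1]
      _ ≤ k := by exact_mod_cast hJ

lemma exists_card_le_kSum_svalsDesc_sq_eq {n : ℕ} {C : Matrix (Fin n) (Fin n) ℂ}
    (hC : C.IsHermitian) (k : ℕ) :
    ∃ J : Finset (Fin n), J.card ≤ k ∧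
      kSum (svalsDesc (C ^ 2)) k = ∑ i ∈ J, hC.eigenvalues i ^ 2 := by
  have hC2 : (C ^ 2).PosSemidef := by
    simpa [hC.eq, sq] using posSemidef_conjTranspose_mul_self C
  have hdiag : C ^ 2 = Unitary.conjStarAlgAut ℂ _ hC.eigenvectorUnitary
      (diagonal (RCLike.ofReal ∘ fun i => hC.eigenvalues i ^ 2)) := by
    conv_lhs => rw [hC.spectral_theorem]
    rw [← map_pow, diagonal_pow]
    congr 2
    ext i
    simp
  obtain ⟨σ, hσ⟩ := hC2.1.exists_eigenvalues_eq_comp _ _ hdiag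
  rw [svalsDesc, matAbs_of_posSemidef hC2, eigsDesc_eq_comp hC2.1, hσ]
  exact exists_card_le_kSum_comp_eq (fun i => hC.eigenvalues i ^ 2) (Equiv.trans _ σ) k

/-- Bhatia: for PSD `A, B` and every `k`, the sum of the `k` largest singular
values of `(A−B)²` is at most that of `A²−B²`. -/
theorem kyfan_sq_sub {n : ℕ} (A B : Matrix (Fin n) (Fin n) ℂ)
    (hA : A.PosSemidef) (hB : B.PosSemidef) (k : ℕ) :
    kSum (svalsDesc ((A - B) ^ 2)) k ≤ kSum (svalsDesc (A ^ 2 - B ^ 2)) k := by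
  have hC : (A - B).IsHermitian := hA.1.sub hB.1
  obtain ⟨J, hJ, hlhs⟩ := exists_card_le_kSum_svalsDesc_sq_eq hC k
  set u := hC.eigenvectorBasis
  have hu : ∀ i, hC.eigenvalues i ^ 2 ≤ (star ⇑(u i) ⬝ᵥ (matAbs (A ^ 2 - B ^ 2) *ᵥ ⇑(u i))).re :=
    fun i => by
      have h := sq_mul_re_dotProduct_le_matAbs_sq_sub_sq hA hB (hC.mulVec_eigenvectorBasis i)
      have hnorm : (star ⇑(u i) ⬝ᵥ ⇑(u i)).re = 1 := by
        rw [dotProduct_comm, ← EuclideanSpace.inner_eq_star_dotProduct, inner_self_eq_norm_sq_to_K,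
          u.orthonormal.1 i]
        simp
      rwa [hnorm, mul_one] at h
  calc kSum (svalsDesc ((A - B) ^ 2)) k = ∑ i ∈ J, hC.eigenvalues i ^ 2 := hlhs
    _ ≤ ∑ i ∈ J, (star ⇑(u i) ⬝ᵥ (matAbs (A ^ 2 - B ^ 2) *ᵥ ⇑(u i))).re :=
      Finset.sum_le_sum fun i _ => hu i
    _ ≤ kSum (svalsDesc (A ^ 2 - B ^ 2)) k :=
      sum_re_dotProduct_mulVec_le_kSum_eigsDesc (posSemidef_matAbs _) u hJ
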